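/- arXiv:2502.04017 — 5 statements merged into one kernel-verified Lean document; each statement's English description precedes it below -/
import Mathlib

section
/- Let f : S¹ → S¹ be a torsion map of order n with lift F satisfying Fⁿ(x) = x + m. Define H = (1/n) · Σ_{j=0}^{n−1} Fʲ. Then H is an increasing map satisfying H(x+1) = H(x)+1 and H ∘ F = R_{m/n} ∘ H, where R_{m/n}(x) = x + m/n. Consequently f is conjugate via the induced circle map h to the rotation by m/n. -/
/-! Averaging the first `n` iterates of the lift replaces `F` by a map on which `F` acts as a
translation: precomposing with `F` shifts the window of iterates by one, so the average changes by
`(Fⁿ x - x) / n = m / n`. Each iterate is strictly increasing and commutes with `x ↦ x + 1`, and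
both properties survive averaging. -/

open Finset

section IterateAverage

variable {K : Type*} [Field K] [LinearOrder K] [IsStrictOrderedRing K]

def iterateAverage (F : K → K) (n : ℕ) (x : K) : K :=
  1 / (n : K) * ∑ j ∈ range n, F^[j] x

theorem strictMono_iterateAverage {F : K → K} (hF : StrictMono F) {n : ℕ} (hn : 0 < n) :
    StrictMono (iterateAverage F n) := by
  intro x y hxy
  have hsum : ∑ j ∈ range n, F^[j] x < ∑ j ∈ range n, F^[j] y :=
    sum_lt_sum_of_nonempty (nonempty_range_iff.mpr hn.ne') fun j _ => hF.iterate j hxy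
  exact mul_lt_mul_of_pos_left hsum (by positivity)

theorem sum_range_iterate_apply_self {M : Type*} [AddCommGroup M] (F : M → M) (n : ℕ) (x : M) :
    ∑ j ∈ range n, F^[j] (F x) = ∑ j ∈ range n, F^[j] x + (F^[n] x - x) := by
  have hshift := sum_range_succ' (fun j => F^[j] x) n
  rw [sum_range_succ, Function.iterate_zero, id_eq] at hshift
  simp only [← Function.iterate_succ_apply]
  rw [add_sub, hshift, add_sub_cancel_right]

theorem iterateAverage_add {F : K → K} {c : K} (hF : ∀ x, F (x + c) = F x + c) {n : ℕ}
    (hn : n ≠ 0) (x : K) : iterateAverage F n (x + c) = iterateAverage F n x + c := by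
  have hcomm : Function.Commute F (· + c) := hF
  have hsum : ∑ j ∈ range n, F^[j] (x + c) = ∑ j ∈ range n, F^[j] x + n * c := by
    simp [(hcomm.iterate_left _).eq, sum_add_distrib]
  unfold iterateAverage
  rw [hsum]
  field_simp

theorem iterateAverage_apply_self {F : K → K} {n : ℕ} {c : K} (hFn : ∀ x, F^[n] x = x + c)
    (x : K) : iterateAverage F n (F x) = iterateAverage F n x + c / n := by
  unfold iterateAverage
  rw [sum_range_iterate_apply_self, hFn, add_sub_cancel_left, mul_add]
  ring

end IterateAverage

theorem conjugation_of_torsion_map_to_rotation_general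
    (F : ℝ → ℝ) (n : ℕ) (m : ℤ) (hn : 0 < n)
    (hmono : StrictMono F)
    (hlift : ∀ x, F (x + 1) = F x + 1)
    (hFn : ∀ x, F^[n] x = x + m)
    (H : ℝ → ℝ)
    (hH : H = fun x => (1 / (n : ℝ)) * ∑ j ∈ Finset.range n, F^[j] x) :
    StrictMono H ∧ (∀ x, H (x + 1) = H x + 1) ∧
      ∀ x, H (F x) = H x + (m : ℝ) / n := by
  have hH' : H = iterateAverage F n := hH
  subst hH'
  exact ⟨strictMono_iterateAverage hmono hn, iterateAverage_add hlift hn.ne',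
    iterateAverage_apply_self hFn⟩

/-- For a torsion map `f` with lift `F` satisfying `Fⁿ(x) = x + m`, the map
`H = (1/n)·Σ_{j=0}^{n−1} Fʲ` is increasing, satisfies `H(x+1) = H(x)+1` and conjugates
`F` to the translation `R_{m/n}(x) = x + m/n`, i.e. `H ∘ F = R_{m/n} ∘ H`. -/
theorem conjugation_of_torsion_map_to_rotation
    (F : ℝ → ℝ) (n : ℕ) (m : ℤ) (hn : 0 < n)
    (hmono : StrictMono F)
    (hcont : Continuous F)
    (hlift : ∀ x, F (x + 1) = F x + 1)
    (hFn : ∀ x, F^[n] x = x + m)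
    (hFi : ∀ i, 0 < i → i < n → ¬ ∃ j : ℤ, ∀ x, F^[i] x = x + j)
    (H : ℝ → ℝ)
    (hH : H = fun x => (1 / (n : ℝ)) * ∑ j ∈ Finset.range n, F^[j] x) :
    StrictMono H ∧ (∀ x, H (x + 1) = H x + 1) ∧
      ∀ x, H (F x) = H x + (m : ℝ) / n :=
  conjugation_of_torsion_map_to_rotation_general F n m hn hmono hlift hFn H hH
end

section
/- Let k, n be positive integers, α = 2kπ/n (with n = ℓ+1, ℓ > 0 rational), a ∈ ℝ, p(φ) = a + cos(ℓφ), u(φ) = (cos φ, sin φ). Then the curve Y(φ) = csc(α)·(p(φ+α)u′(φ) − p(φ)u′(φ+α)), after the reparametrization φ ↦ φ − α/2, equals Ŷ(φ) = a·sec(α/2)·u(φ) + (−1)ᵏ·u(nφ), provided cos(α/2) ≠ 0 and sin α ≠ 0. -/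
open Real

/-- The unit vector `u(φ) = (cos φ, sin φ)`. -/
noncomputable def uvec (φ : ℝ) : ℝ × ℝ := (Real.cos φ, Real.sin φ)

/-- Its derivative `u′(φ) = (−sin φ, cos φ)`. -/
noncomputable def uvec' (φ : ℝ) : ℝ × ℝ := (-Real.sin φ, Real.cos φ)

/-- for `p(φ) = a + cos(ℓφ)`, `n = ℓ + 1`, `α = 2kπ/n`, the reparametrized
vertex curve `csc α·(p(φ+α/2)u′(φ−α/2) − p(φ−α/2)u′(φ+α/2))` equals the epitrochoid
`a·sec(α/2)·u(φ) + (−1)ᵏ·u(nφ)`. -/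
theorem vertex_curve_is_epitrochoid
    (k : ℕ) (hk : 0 < k) (ℓ : ℚ) (hℓ : 0 < ℓ) (a : ℝ)
    (n α : ℝ) (hn : n = (ℓ : ℝ) + 1) (hα : α = 2 * k * π / n)
    (p : ℝ → ℝ) (hp : p = fun φ => a + Real.cos ((ℓ : ℝ) * φ))
    (hcos : Real.cos (α / 2) ≠ 0) (hsin : Real.sin α ≠ 0) (φ : ℝ) :
    (Real.sin α)⁻¹ •
        (p (φ + α / 2) • uvec' (φ - α / 2) - p (φ - α / 2) • uvec' (φ + α / 2)) =
      (a * (Real.cos (α / 2))⁻¹) • uvec φ + ((-1 : ℝ) ^ k) • uvec (n * φ) := by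
  have hn0 : n ≠ 0 := by
    rw [hn]
    have : (0:ℝ) < (ℓ:ℝ) := by exact_mod_cast hℓ
    linarith
  have hβ : n * (α / 2) = k * π := by
    rw [hα]; field_simp
  have hℓn : (ℓ : ℝ) = n - 1 := by rw [hn]; ring
  have e1 : (ℓ : ℝ) * (φ + α / 2) = (n * φ - (φ + α / 2)) + k * π := by
    rw [hℓn]; linear_combination hβ
  have e2 : (ℓ : ℝ) * (φ - α / 2) = (n * φ - (φ - α / 2)) - k * π := by
    rw [hℓn]; linear_combination -hβ
  have hs : Real.sin α = 2 * Real.sin (α / 2) * Real.cos (α / 2) := by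
    calc Real.sin α = Real.sin (2 * (α / 2)) := by ring_nf
    _ = 2 * Real.sin (α / 2) * Real.cos (α / 2) := Real.sin_two_mul _
  have hsin2 : Real.sin (α / 2) * Real.cos (α / 2) ≠ 0 := by
    intro h; apply hsin; rw [hs]; linarith [mul_eq_zero.mp h]; 
  subst hp
  simp only [uvec, uvec', Prod.smul_mk, Prod.mk_sub_mk, Prod.mk_add_mk, smul_eq_mul]
  rw [e1, e2, Real.cos_add_nat_mul_pi, Real.cos_sub_nat_mul_pi, hs]
  have hss : Real.sin (α/2) ≠ 0 := fun h => hsin2 (by rw [h]; ring)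
  refine Prod.ext ?_ ?_ <;>
      simp only [Real.cos_sub, Real.sin_sub, Real.cos_add, Real.sin_add] <;>
      field_simp
  · linear_combination (2 * (-1:ℝ)^k * Real.cos (n*φ) * Real.cos (α/2) *
      Real.sin (α/2)) * (Real.sin_sq_add_cos_sq φ)
  · linear_combination (2 * (-1:ℝ)^k * Real.sin (n*φ) * Real.cos (α/2) *
      Real.sin (α/2)) * (Real.sin_sq_add_cos_sq φ)
end

section
/- Let Z : S¹ → ℝ² be C², Δ(t) = Z(t+α) − Z(t), and assume ⟨Δ′(t), JΔ(t)⟩ ≠ 0 for all t. Define X = Z − (⟨Z′, JΔ⟩/⟨Δ′, JΔ⟩)·Δ. If Z is C³ and X′(t) ≠ 0 for all t, then ⟨X″(t), JX′(t)⟩ ≠ 0 for all t; conversely, if ⟨X″(t), JX′(t)⟩ ≠ 0 for all t then X′(t) ≠ 0 for all t. Moreover ⟨X″, JX′⟩ = g²·⟨Δ′, JΔ⟩ where g = ⟨X′, Δ⟩/‖Δ‖². -/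
open Real

/-- Euclidean dot product on `ℝ × ℝ`. -/
def dot2 (v w : ℝ × ℝ) : ℝ := v.1 * w.1 + v.2 * w.2

/-- Rotation by `π/2`, i.e. `J = [[0,−1],[1,0]]`. -/
def Jrot (v : ℝ × ℝ) : ℝ × ℝ := (-v.2, v.1)

lemma dot2_sub_left (a b c : ℝ × ℝ) : dot2 (a - b) c = dot2 a c - dot2 b c := by
  simp [dot2]; ring

lemma dot2_add_left (a b c : ℝ × ℝ) : dot2 (a + b) c = dot2 a c + dot2 b c := by
  simp [dot2]; ring

lemma dot2_smul_left (r : ℝ) (a b : ℝ × ℝ) : dot2 (r • a) b = r * dot2 a b := by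
  simp [dot2]; ring

lemma dot2_smul_right (r : ℝ) (a b : ℝ × ℝ) : dot2 a (r • b) = r * dot2 a b := by
  simp [dot2]; ring

lemma Jrot_smul (r : ℝ) (v : ℝ × ℝ) : Jrot (r • v) = r • Jrot v := by
  simp [Jrot, Prod.ext_iff]

lemma dot2_Jrot_self (v : ℝ × ℝ) : dot2 v (Jrot v) = 0 := by
  simp [dot2, Jrot]; ring

lemma dot2_self_ne_zero {v : ℝ × ℝ} (hv : v ≠ 0) : dot2 v v ≠ 0 := by
  obtain ⟨a, b⟩ := v
  simp only [dot2]
  intro h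
  apply hv
  have ha : a = 0 := by nlinarith
  have hb : b = 0 := by nlinarith
  simp [ha, hb, Prod.ext_iff]

lemma parallel_of_det_zero {v w : ℝ × ℝ} (h : dot2 v (Jrot w) = 0) (hw : w ≠ 0) :
    v = (dot2 v w / dot2 w w) • w := by
  have hww : dot2 w w ≠ 0 := dot2_self_ne_zero hw
  obtain ⟨v1, v2⟩ := v
  obtain ⟨w1, w2⟩ := w
  simp only [dot2, Jrot] at h hww ⊢
  rw [Prod.ext_iff]
  constructor
  · show v1 = (v1 * w1 + v2 * w2) / (w1 * w1 + w2 * w2) * w1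
    rw [div_mul_eq_mul_div, eq_div_iff hww]
    linear_combination (-w2) * h
  · show v2 = (v1 * w1 + v2 * w2) / (w1 * w1 + w2 * w2) * w2
    rw [div_mul_eq_mul_div, eq_div_iff hww]
    linear_combination w1 * h

lemma ContDiff.dot2comp {n : ℕ∞} {f h : ℝ → ℝ × ℝ} (hf : ContDiff ℝ n f)
    (hh : ContDiff ℝ n h) : ContDiff ℝ n fun t => dot2 (f t) (h t) := by
  simp only [dot2]
  exact (hf.fst.mul hh.fst).add (hf.snd.mul hh.snd)

lemma ContDiff.jrotcomp {n : ℕ∞} {f : ℝ → ℝ × ℝ} (hf : ContDiff ℝ n f) :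
    ContDiff ℝ n fun t => Jrot (f t) := by
  simp only [Jrot]
  exact hf.snd.neg.prodMk hf.fst

/-- For the envelope `X = Z − (⟨Z′,JΔ⟩/⟨Δ′,JΔ⟩)·Δ` of the chords of a
`C³` curve `Z` (with `Δ(t) = Z(t+α) − Z(t)` and `⟨Δ′,JΔ⟩ ≠ 0`): `X` is regular iff
its curvature never vanishes, and `⟨X″,JX′⟩ = g²·⟨Δ′,JΔ⟩` where `g = ⟨X′,Δ⟩/‖Δ‖²`. -/
theorem envelope_regular_iff_nonvanishing_curvature
    (Z : ℝ → ℝ × ℝ) (α : ℝ) (hZ : ContDiff ℝ 3 Z)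
    (Δ : ℝ → ℝ × ℝ) (hΔ : Δ = fun t => Z (t + α) - Z t)
    (hden : ∀ t, dot2 (deriv Δ t) (Jrot (Δ t)) ≠ 0)
    (X : ℝ → ℝ × ℝ)
    (hX : X = fun t => Z t -
      (dot2 (deriv Z t) (Jrot (Δ t)) / dot2 (deriv Δ t) (Jrot (Δ t))) • Δ t)
    (g : ℝ → ℝ) (hg : g = fun t => dot2 (deriv X t) (Δ t) / dot2 (Δ t) (Δ t)) :
    ((∀ t, deriv X t ≠ 0) →
        ∀ t, dot2 (deriv (deriv X) t) (Jrot (deriv X t)) ≠ 0) ∧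
    ((∀ t, dot2 (deriv (deriv X) t) (Jrot (deriv X t)) ≠ 0) →
        ∀ t, deriv X t ≠ 0) ∧
    ((∀ t, deriv X t ≠ 0) →
        ∀ t, dot2 (deriv (deriv X) t) (Jrot (deriv X t)) =
          g t ^ 2 * dot2 (deriv Δ t) (Jrot (Δ t))) := by
  have hΔ3 : ContDiff ℝ 3 Δ := by
    rw [hΔ]
    exact (hZ.comp (contDiff_id.add contDiff_const)).sub hZ
  have hZ' : ContDiff ℝ 2 (deriv Z) := by
    have : ContDiff ℝ ((2 : ℕ) + 1) Z := by exact_mod_cast hZ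
    exact_mod_cast (contDiff_succ_iff_deriv.mp this).2.2
  have hΔ' : ContDiff ℝ 2 (deriv Δ) := by
    have : ContDiff ℝ ((2 : ℕ) + 1) Δ := by exact_mod_cast hΔ3
    exact_mod_cast (contDiff_succ_iff_deriv.mp this).2.2
  have hΔ2 : ContDiff ℝ 2 Δ := hΔ3.of_le (by norm_num)
  set lam : ℝ → ℝ := fun t =>
    dot2 (deriv Z t) (Jrot (Δ t)) / dot2 (deriv Δ t) (Jrot (Δ t)) with hlam
  have hlamC : ContDiff ℝ 2 lam :=
    (hZ'.dot2comp hΔ2.jrotcomp).div (hΔ'.dot2comp hΔ2.jrotcomp) hden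
  have hX2 : ContDiff ℝ 2 X := by
    rw [hX]
    exact (hZ.of_le (by norm_num)).sub (hlamC.smul hΔ2)
  have hZd : Differentiable ℝ Z := hZ.differentiable (by norm_num)
  have hΔd : Differentiable ℝ Δ := hΔ3.differentiable (by norm_num)
  have hlamd : Differentiable ℝ lam := hlamC.differentiable (by norm_num)
  have hΔne : ∀ t, Δ t ≠ 0 := by
    intro t h
    exact hden t (by simp [h, dot2, Jrot])
  have hXderiv : ∀ t, deriv X t =
      deriv Z t - (lam t • deriv Δ t + deriv lam t • Δ t) := by
    intro t
    rw [hX]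
    exact ((hZd t).hasDerivAt.sub
      (((hlamd t).hasDerivAt.smul (hΔd t).hasDerivAt))).deriv
  have hperp : ∀ t, dot2 (deriv X t) (Jrot (Δ t)) = 0 := by
    intro t
    rw [hXderiv t, dot2_sub_left, dot2_add_left, dot2_smul_left, dot2_smul_left,
      dot2_Jrot_self]
    have := hden t
    field_simp [hlam]
    simp only [hlam, mul_zero, add_zero]
    rw [div_mul_cancel₀ _ this, sub_self]
  have hkey : ∀ t, deriv X t = g t • Δ t := by
    intro t
    rw [hg]
    exact parallel_of_det_zero (hperp t) (hΔne t)
  have hX'c : ContDiff ℝ 1 (deriv X) := by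
    have h2 : ContDiff ℝ ((1 : ℕ) + 1) X := by exact_mod_cast hX2
    exact_mod_cast (contDiff_succ_iff_deriv.mp h2).2.2
  have hgC : ContDiff ℝ 1 g := by
    rw [hg]
    have hΔ1 : ContDiff ℝ 1 Δ := hΔ2.of_le (by norm_num)
    exact (hX'c.dot2comp hΔ1).div (hΔ1.dot2comp hΔ1)
      fun t => dot2_self_ne_zero (hΔne t)
  have hgd : Differentiable ℝ g := hgC.differentiable (by norm_num)
  have hX'' : ∀ t, deriv (deriv X) t = g t • deriv Δ t + deriv g t • Δ t := by
    intro t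
    have hfe : deriv X = fun s => g s • Δ s := funext hkey
    rw [hfe]
    exact ((hgd t).hasDerivAt.smul (hΔd t).hasDerivAt).deriv
  have hId : ∀ t, dot2 (deriv (deriv X) t) (Jrot (deriv X t)) =
      g t ^ 2 * dot2 (deriv Δ t) (Jrot (Δ t)) := by
    intro t
    rw [hX'' t, hkey t, Jrot_smul, dot2_smul_right, dot2_add_left, dot2_smul_left,
      dot2_smul_left, dot2_Jrot_self]
    ring
  have hgne_of : ∀ t, deriv X t ≠ 0 → g t ≠ 0 := by
    intro t h hg0
    exact h (by rw [hkey t, hg0, zero_smul])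
  refine ⟨fun hreg t => ?_, fun hcur t => ?_, fun _ t => hId t⟩
  · rw [hId t]
    exact mul_ne_zero (pow_ne_zero 2 (hgne_of t (hreg t))) (hden t)
  · have h := hcur t
    rw [hId t] at h
    have hgne : g t ≠ 0 := by
      intro h0
      exact h (by rw [h0]; ring)
    rw [hkey t]
    exact smul_ne_zero hgne (hΔne t)
end

section
/- Let Z : ℝ/2πℤ → ℝ² be a positively oriented regular C² curve without self-intersections and with positive curvature, i.e., for all t and all 0 < α < 2π, ⟨Z(t+α) − Z(t), JZ′(t)⟩ > 0 and ⟨Z(t) − Z(t+α), JZ′(t+α)⟩ > 0. Then with Δ(t) = Z(t+α) − Z(t): (a) ⟨Δ′(t), JΔ(t)⟩ > 0, and (b) the number s(t) = −⟨Z′(t), JΔ(t)⟩/⟨Δ′(t), JΔ(t)⟩ satisfies 0 < s(t) < 1. -/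
open Real

/-- For a positively oriented convex regular `C²` curve `Z` (encoded by
the two tangent-line inequalities) and `0 < α < 2π`, with `Δ(t) = Z(t+α) − Z(t)`:
(a) `⟨Δ′(t), JΔ(t)⟩ > 0`, and (b) `0 < s(t) < 1` for
`s(t) = −⟨Z′(t), JΔ(t)⟩/⟨Δ′(t), JΔ(t)⟩`. -/
theorem convex_curve_envelope_contact_inside_chord
    (Z : ℝ → ℝ × ℝ) (hper : Function.Periodic Z (2 * π))
    (hZ : ContDiff ℝ 2 Z) (hreg : ∀ t, deriv Z t ≠ 0)
    (hconv : ∀ t : ℝ, ∀ β : ℝ, 0 < β → β < 2 * π →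
      0 < dot2 (Z (t + β) - Z t) (Jrot (deriv Z t)) ∧
      0 < dot2 (Z t - Z (t + β)) (Jrot (deriv Z (t + β))))
    (α : ℝ) (hα0 : 0 < α) (hα2π : α < 2 * π)
    (Δ : ℝ → ℝ × ℝ) (hΔ : Δ = fun t => Z (t + α) - Z t)
    (s : ℝ → ℝ)
    (hs : s = fun t => -dot2 (deriv Z t) (Jrot (Δ t)) / dot2 (deriv Δ t) (Jrot (Δ t))) :
    ∀ t : ℝ, 0 < dot2 (deriv Δ t) (Jrot (Δ t)) ∧ 0 < s t ∧ s t < 1 := by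
  have hdiff : Differentiable ℝ Z := hZ.differentiable (by norm_num)
  intro t
  have hshift : DifferentiableAt ℝ (fun u => Z (u + α)) t :=
    (hdiff (t + α)).comp t (differentiableAt_id.add_const α)
  have hΔ' : deriv Δ t = deriv Z (t + α) - deriv Z t := by
    rw [hΔ, deriv_fun_sub hshift (hdiff t), deriv_comp_add_const]
  obtain ⟨h1, h2⟩ := hconv t α hα0 hα2π
  rw [← neg_sub (Z (t + α)) (Z t)] at h2
  subst hΔ hs
  simp only [hΔ']
  simp only [dot2, Jrot, Prod.fst_sub, Prod.snd_sub, Prod.fst_neg, Prod.snd_neg,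
    neg_neg] at h1 h2 ⊢
  have hden : 0 < ((deriv Z (t + α)).1 - (deriv Z t).1) * -((Z (t + α)).2 - (Z t).2) +
      ((deriv Z (t + α)).2 - (deriv Z t).2) * ((Z (t + α)).1 - (Z t).1) := by nlinarith
  refine ⟨hden, div_pos (by nlinarith) hden, ?_⟩
  rw [div_lt_one hden]
  nlinarith
end

section
/- Let α₁, …, α_n ∈ (0, π) with α₁ + ⋯ + α_n = 2πm for a natural number m ≥ 1, let p be a C² support function, and for each i define Y_i(φ) = csc(α_i)·(p(φ+α_i)u′(φ) − p(φ)u′(φ+α_i)). Then for each φ and each i, the points Y_i(φ + α₁ + ⋯ + α_{i−1}) and Y_{i+1}(φ + α₁ + ⋯ + α_i) both lie on the tangent line {z : ⟨z, u(φ + α₁ + ⋯ + α_i)⟩ = p(φ + α₁ + ⋯ + α_i)} of the curve with support function p (indices mod n, with Y_{n+1} interpreted via the periodicity α₁+⋯+α_n = 2πm). -/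
open Real

lemma dotA (a ψ p0 p1 : ℝ) (h : Real.sin a ≠ 0) :
    dot2 ((Real.sin a)⁻¹ • (p1 • uvec' ψ - p0 • uvec' (ψ + a))) (uvec (ψ + a)) = p1 := by
  have hA : Real.sin (ψ + a) * Real.cos ψ - Real.cos (ψ + a) * Real.sin ψ = Real.sin a := by
    rw [← Real.sin_sub]; ring_nf
  simp only [dot2, uvec, uvec', Prod.smul_fst, Prod.smul_snd, Prod.fst_sub, Prod.snd_sub,
    smul_eq_mul]
  field_simp
  linear_combination p1 * hA

lemma dotB (a ψ p0 p1 : ℝ) (h : Real.sin a ≠ 0) :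
    dot2 ((Real.sin a)⁻¹ • (p1 • uvec' ψ - p0 • uvec' (ψ + a))) (uvec ψ) = p0 := by
  have hA : Real.sin (ψ + a) * Real.cos ψ - Real.cos (ψ + a) * Real.sin ψ = Real.sin a := by
    rw [← Real.sin_sub]; ring_nf
  simp only [dot2, uvec, uvec', Prod.smul_fst, Prod.smul_snd, Prod.fst_sub, Prod.snd_sub,
    smul_eq_mul]
  field_simp
  linear_combination p0 * hA

/-- Poncelet clan construction. Given angles `α₀, …, α_{n−1} ∈ (0, π)`
(extended `n`-periodically to all of `ℕ`) with `α₀ + ⋯ + α_{n−1} = 2πm`, `m ≥ 1`, a `C²`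
support function `p`, and the vertex curves
`Y_i(φ) = csc(α_i)·(p(φ+α_i)u′(φ) − p(φ)u′(φ+α_i))`, the consecutive vertices
`Y_i(φ + S_i)` and `Y_{i+1}(φ + S_{i+1})`, where `S_i = α₀ + ⋯ + α_{i−1}`, both lie on
the tangent line `{z : ⟨z, u(φ + S_{i+1})⟩ = p(φ + S_{i+1})}` of the envelope with
support function `p`. -/
theorem poncelet_clan_consecutive_vertices_on_common_tangent
    (n : ℕ) (hn : 1 ≤ n) (m : ℕ) (hm : 1 ≤ m)
    (α : ℕ → ℝ) (hrange : ∀ i, 0 < α i ∧ α i < π)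
    (hper : ∀ i, α (i + n) = α i)
    (hsum : ∑ j ∈ Finset.range n, α j = 2 * π * m)
    (p : ℝ → ℝ) (hp : ContDiff ℝ 2 p)
    (Y : ℕ → ℝ → ℝ × ℝ)
    (hY : Y = fun i φ =>
      (Real.sin (α i))⁻¹ • (p (φ + α i) • uvec' φ - p φ • uvec' (φ + α i)))
    (S : ℕ → ℝ) (hS : S = fun i => ∑ j ∈ Finset.range i, α j) :
    ∀ φ : ℝ, ∀ i : ℕ,
      dot2 (Y i (φ + S i)) (uvec (φ + S (i + 1))) = p (φ + S (i + 1)) ∧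
      dot2 (Y (i + 1) (φ + S (i + 1))) (uvec (φ + S (i + 1))) = p (φ + S (i + 1)) := by
  subst hY hS
  intro φ i
  have hne : ∀ j, Real.sin (α j) ≠ 0 := fun j =>
    ne_of_gt (Real.sin_pos_of_pos_of_lt_pi (hrange j).1 (hrange j).2)
  have hstep : (∑ j ∈ Finset.range (i+1), α j) = (∑ j ∈ Finset.range i, α j) + α i :=
    Finset.sum_range_succ α i
  constructor
  · have h2 : φ + ((∑ j ∈ Finset.range i, α j) + α i)
        = (φ + ∑ j ∈ Finset.range i, α j) + α i := by ring
    simp only [hstep, h2]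
    exact dotA (α i) (φ + ∑ j ∈ Finset.range i, α j) _ _ (hne i)
  · simp only [hstep]
    exact dotB (α (i+1)) (φ + ((∑ j ∈ Finset.range i, α j) + α i)) _ _ (hne (i+1))
end
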